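/- Assume 1 + p₁ - p₂ ≠ 0. Then for every n ∈ ℕ, the expected number of captures after n games has the exact closed form: ∑_{i=0}^{n-1} (p₁ * (η i 0) + p₂ * (η i 1)) = n * p₁ / (1 + p₁ - p₂) - p₁ * (p₂ - p₁) * (1 - (p₂ - p₁)^n) / (1 + p₁ - p₂)^2. -/

import Mathlib

open Matrix Filter

/-- Transition matrix of the two-state Markov chain:
row 0 = (1 - p₁, 1 - p₂), row 1 = (p₁, p₂). -/
def M (p₁ p₂ : ℝ) : Matrix (Fin 2) (Fin 2) ℝ := !![1 - p₁, 1 - p₂; p₁, p₂]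

/-- Initial distribution: defender at the target center. -/
def e₁ : Fin 2 → ℝ := ![1, 0]

/-- Distribution of the chain after `n` games when started in `S₁`. -/
def η (p₁ p₂ : ℝ) (n : ℕ) : Fin 2 → ℝ := (M p₁ p₂ ^ n) *ᵥ e₁

/-!
A game is a capture exactly when the defender ends it on the capture circle, so the capture
probability of game `i` is `η (i + 1) 1`. Since the chain preserves total mass, `η n 1` obeys the
affine recurrence `a (n + 1) = p₁ + (p₂ - p₁) * a n` with `a 0 = 0`, whose solution is
`p₁ (1 - λⁿ) / (1 - λ)` for `λ = p₂ - p₁`; summing this geometric expression gives the claim.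
-/

open Finset

section

variable {K : Type*} [Field K]

theorem eq_of_affine_recurrence {a : ℕ → K} {b r : K} (hr : 1 - r ≠ 0) (h₀ : a 0 = 0)
    (hsucc : ∀ n, a (n + 1) = b + r * a n) (n : ℕ) : a n = b * (1 - r ^ n) / (1 - r) := by
  induction n with
  | zero => simp [h₀]
  | succ n ih =>
    rw [hsucc, ih]
    field_simp
    ring

theorem sum_range_one_sub_pow_succ {r : K} (hr : 1 - r ≠ 0) (n : ℕ) :
    ∑ i ∈ range n, (1 - r ^ (i + 1)) = n - r * (1 - r ^ n) / (1 - r) := by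
  induction n with
  | zero => simp
  | succ n ih =>
    rw [sum_range_succ, ih]
    push_cast
    field_simp
    ring

end

section CaptureChain

variable (p₁ p₂ : ℝ)

theorem η_zero : η p₁ p₂ 0 = e₁ := by
  simp [η]

theorem η_succ (n : ℕ) : η p₁ p₂ (n + 1) = M p₁ p₂ *ᵥ η p₁ p₂ n := by
  simp only [η, pow_succ', mulVec_mulVec]

theorem η_succ_zero (n : ℕ) :
    η p₁ p₂ (n + 1) 0 = (1 - p₁) * η p₁ p₂ n 0 + (1 - p₂) * η p₁ p₂ n 1 := by
  simp [η_succ, M, mulVec, dotProduct, Fin.sum_univ_two]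

theorem η_succ_one (n : ℕ) :
    η p₁ p₂ (n + 1) 1 = p₁ * η p₁ p₂ n 0 + p₂ * η p₁ p₂ n 1 := by
  simp [η_succ, M, mulVec, dotProduct, Fin.sum_univ_two]

theorem η_zero_add_η_one (n : ℕ) : η p₁ p₂ n 0 + η p₁ p₂ n 1 = 1 := by
  induction n with
  | zero => simp [η_zero, e₁]
  | succ n ih => rw [η_succ_zero, η_succ_one]; linarith

theorem η_one_eq (h : 1 + p₁ - p₂ ≠ 0) (n : ℕ) :
    η p₁ p₂ n 1 = p₁ * (1 - (p₂ - p₁) ^ n) / (1 + p₁ - p₂) := by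
  have hr : 1 - (p₂ - p₁) = 1 + p₁ - p₂ := by ring
  rw [← hr] at h ⊢
  refine eq_of_affine_recurrence (a := fun k ↦ η p₁ p₂ k 1) h ?_ (fun k ↦ ?_) n
  · simp [η_zero, e₁]
  · rw [η_succ_one]
    linear_combination p₁ * η_zero_add_η_one p₁ p₂ k

end CaptureChain

theorem expected_captures_closed_form (p₁ p₂ : ℝ) (h : 1 + p₁ - p₂ ≠ 0) (n : ℕ) :
    ∑ i ∈ Finset.range n, (p₁ * η p₁ p₂ i 0 + p₂ * η p₁ p₂ i 1) =
      n * p₁ / (1 + p₁ - p₂) -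
        p₁ * (p₂ - p₁) * (1 - (p₂ - p₁) ^ n) / (1 + p₁ - p₂) ^ 2 := by
  have hr : 1 - (p₂ - p₁) = 1 + p₁ - p₂ := by ring
  calc ∑ i ∈ range n, (p₁ * η p₁ p₂ i 0 + p₂ * η p₁ p₂ i 1)
      = ∑ i ∈ range n, η p₁ p₂ (i + 1) 1 := by simp only [η_succ_one]
    _ = p₁ / (1 + p₁ - p₂) * ∑ i ∈ range n, (1 - (p₂ - p₁) ^ (i + 1)) := by
      rw [mul_sum]
      exact sum_congr rfl fun i _ ↦ by rw [η_one_eq p₁ p₂ h]; ring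
    _ = _ := by
      rw [sum_range_one_sub_pow_succ (hr ▸ h), hr]
      field_simp
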